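/- arXiv:1707.00359 — 5 statements merged into one kernel-verified Lean document; each statement's English description precedes it below -/
import Mathlib

section
/- The path on n+1 vertices (of length n) has tree-depth exactly ⌈log₂(n+2)⌉. -/
/-!
Upper bound: label the vertices of the path `1, …, n + 1` and make `b` an ancestor of `a` when
`|a - b| < 2 ^ v₂(b)`. This is the in-order labelling of the complete binary tree on
`{1, …, 2 ^ K - 1}`: of two consecutive integers the even one is an ancestor of the odd one, and
the strict ancestors of a vertex have pairwise distinct valuations in `[1, K)`.

Lower bound: the vertices of a path in an elimination forest all lie below a common root `r`;
deleting `r` leaves a subpath containing at least half of the other vertices, so by induction a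
path on `2 ^ k` vertices has a vertex with at least `k` strict ancestors.
-/

def IsForestOrder {V : Type} (le : V → V → Prop) : Prop :=
  (∀ x, le x x) ∧ (∀ x y z, le x y → le y z → le x z) ∧
  (∀ x y, le x y → le y x → x = y) ∧
  (∀ x y z, le x y → le x z → (le y z ∨ le z y))

/-- Tree-depth: one more than the minimum height of a rooted forest whose closure
(each vertex adjacent to all its ancestors) contains `G` as a subgraph.
The height of a vertex is its number of strict ancestors. -/
noncomputable def treeDepth {V : Type} (G : SimpleGraph V) : ℕ :=
  sInf { n : ℕ | ∃ le : V → V → Prop, IsForestOrder le ∧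
    (∀ x y, G.Adj x y → (le x y ∨ le y x)) ∧
    (∀ x : V, ({y : V | le x y ∧ y ≠ x}).ncard + 1 ≤ n) }

def HasEliminationForest {V : Type} (G : SimpleGraph V) (d : ℕ) : Prop :=
  ∃ le : V → V → Prop, IsForestOrder le ∧ (∀ x y, G.Adj x y → (le x y ∨ le y x)) ∧
    ∀ x : V, ({y : V | le x y ∧ y ≠ x}).ncard + 1 ≤ d

theorem treeDepth_le {V : Type} {G : SimpleGraph V} {d : ℕ} (h : HasEliminationForest G d) :
    treeDepth G ≤ d :=
  Nat.sInf_le h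

theorem hasEliminationForest_treeDepth {V : Type} {G : SimpleGraph V} {d : ℕ}
    (h : HasEliminationForest G d) : HasEliminationForest G (treeDepth G) :=
  Nat.sInf_mem (s := {d | HasEliminationForest G d}) ⟨d, h⟩

theorem List.Nodup.exists_infix_notMem {α : Type*} {l : List α} (hl : l.Nodup) (a : α) :
    ∃ l', l' <:+: l ∧ a ∉ l' ∧ l.length ≤ 2 * l'.length + 1 := by
  by_cases ha : a ∈ l
  · obtain ⟨s, t, rfl⟩ := List.append_of_mem ha
    have hst : a ∉ s ++ t := (List.nodup_cons.1 (List.nodup_middle.1 hl)).1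
    rw [List.mem_append, not_or] at hst
    rcases le_total s.length t.length with h | h
    · exact ⟨t, ⟨s ++ [a], [], by simp⟩, hst.2, by simp; omega⟩
    · exact ⟨s, ⟨[], a :: t, by simp⟩, hst.1, by simp; omega⟩
  · exact ⟨l, List.infix_refl l, ha, by omega⟩

namespace IsForestOrder

variable {V : Type} {le : V → V → Prop}

theorem exists_mem_forall_le [Finite V] (hF : IsForestOrder le) {U : Set V} {l : List V}
    (hlU : ∀ x ∈ l, x ∈ U) (hl : l.IsChain fun x y => le x y ∨ le y x) (hne : l ≠ []) :
    ∃ r ∈ U, ∀ x ∈ l, le x r := by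
  obtain ⟨hrefl, htrans, hanti, hbranch⟩ := hF
  obtain ⟨r, ⟨hrU, hr⟩, hmin⟩ := Set.exists_min_image {y | y ∈ U ∧ le (l.head hne) y}
    (fun y => {w | le y w}.ncard) (Set.toFinite _) ⟨_, hlU _ (List.head_mem hne), hrefl _⟩
  have hmax : ∀ z ∈ U, le r z → z = r := by
    intro z hzU hrz
    by_contra hzr
    have hss : {w | le z w} ⊂ {w | le r w} :=
      ⟨fun w hw => htrans _ _ _ hrz hw, fun h => hzr (hanti _ _ (h (hrefl r)) hrz)⟩
    exact (Set.ncard_lt_ncard hss).not_ge (hmin z ⟨hzU, htrans _ _ _ hr hrz⟩)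
  refine ⟨r, hrU, (List.IsChain.iff_mem.1 hl).induction (le · r) l ?_ fun _ => hr⟩
  rintro x y ⟨-, hyl, hxy | hyx⟩ hxr
  · rcases hbranch _ _ _ hxy hxr with h | h
    · exact h
    · exact hmax y (hlU y hyl) h ▸ hrefl r
  · exact htrans _ _ _ hyx hxr

/- Ancestors are counted inside `U` so that the common root found at each step can be removed
from `U` instead of from the type. -/
theorem exists_le_ncard_ancestors [Finite V] (hF : IsForestOrder le) (k : ℕ) {U : Set V}
    {l : List V} (hlU : ∀ x ∈ l, x ∈ U) (hnd : l.Nodup)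
    (hl : l.IsChain fun x y => le x y ∨ le y x) (hlen : 2 ^ k ≤ l.length) :
    ∃ x ∈ l, k ≤ {y | y ∈ U ∧ le x y ∧ y ≠ x}.ncard := by
  induction k generalizing U l with
  | zero =>
    obtain ⟨x, hx⟩ := List.exists_mem_of_length_pos (l := l) (by simp at hlen; omega)
    exact ⟨x, hx, Nat.zero_le _⟩
  | succ k ih =>
    obtain ⟨r, hrU, hlr⟩ := hF.exists_mem_forall_le hlU hl
      (List.ne_nil_of_length_pos ((Nat.two_pow_pos _).trans_le hlen))
    obtain ⟨l', hl', hr, hlen'⟩ := hnd.exists_infix_notMem r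
    obtain ⟨x, hx, hk⟩ := ih (U := U \ {r}) (l := l')
      (fun y hy => ⟨hlU y (hl'.subset hy), fun h => hr (h ▸ hy)⟩) (hnd.sublist hl'.sublist)
      (hl.infix hl') (by rw [pow_succ] at hlen; omega)
    refine ⟨x, hl'.subset hx, ?_⟩
    have hxr : r ≠ x := fun h => hr (h ▸ hx)
    calc k + 1 ≤ {y | y ∈ U \ {r} ∧ le x y ∧ y ≠ x}.ncard + 1 := by omega
      _ = (insert r {y | y ∈ U \ {r} ∧ le x y ∧ y ≠ x}).ncard :=
        (Set.ncard_insert_of_notMem (by simp) (Set.toFinite _)).symm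
      _ ≤ {y | y ∈ U ∧ le x y ∧ y ≠ x}.ncard := by
        refine Set.ncard_le_ncard (Set.insert_subset ⟨hrU, hlr x (hl'.subset hx), hxr⟩ ?_)
        exact fun y ⟨⟨hyU, _⟩, hy⟩ => ⟨hyU, hy⟩

end IsForestOrder

theorem HasEliminationForest.lt_of_isChain {V : Type} [Finite V] {G : SimpleGraph V} {d : ℕ}
    (hG : HasEliminationForest G d) {k : ℕ} {l : List V} (hnd : l.Nodup)
    (hl : l.IsChain G.Adj) (hlen : 2 ^ k ≤ l.length) : k < d := by
  obtain ⟨le, hF, hadj, hdepth⟩ := hG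
  obtain ⟨x, -, hx⟩ := hF.exists_le_ncard_ancestors k (U := Set.univ) (fun _ _ => trivial) hnd
    (hl.imp hadj) hlen
  simp only [Set.mem_univ, true_and] at hx
  exact hx.trans_lt (hdepth x)

theorem le_of_dvd_of_lt_of_le_add {d u w a : ℤ} (hu : d ∣ u) (hw : d ∣ w) (hwa : w < a)
    (hau : a ≤ u + d) : w ≤ u := by
  by_contra! h
  have := Int.le_of_dvd (by omega) (dvd_sub hw hu)
  omega

def lowBit (b : ℕ) : ℕ := ordProj[2] b

theorem lowBit_pos (b : ℕ) : 0 < lowBit b := Nat.ordProj_pos b 2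

theorem lowBit_dvd (b : ℕ) : lowBit b ∣ b := Nat.ordProj_dvd b 2

theorem lowBit_dvd_lowBit {a b : ℕ} (h : lowBit a ≤ lowBit b) : lowBit a ∣ lowBit b :=
  Nat.pow_dvd_pow 2 ((Nat.pow_le_pow_iff_right one_lt_two).1 h)

theorem two_le_lowBit {b : ℕ} (hb : b ≠ 0) (h2 : 2 ∣ b) : 2 ≤ lowBit b :=
  Nat.pow_le_pow_right two_pos <|
    (Nat.Prime.pow_dvd_iff_le_factorization (k := 1) Nat.prime_two hb).1 (by rwa [pow_one])

theorem two_mul_lowBit_dvd {b : ℕ} (hb : b ≠ 0) :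
    (2 * lowBit b : ℤ) ∣ b - lowBit b ∧ (2 * lowBit b : ℤ) ∣ b + lowBit b := by
  obtain ⟨t, ht⟩ : Odd (ordCompl[2] b) :=
    Nat.odd_iff.2 (Nat.two_dvd_ne_zero.1 (Nat.not_dvd_ordCompl Nat.prime_two hb))
  have hb' : (b : ℤ) = lowBit b * (2 * t + 1) := by
    exact_mod_cast (Nat.ordProj_mul_ordCompl_eq_self b 2).symm.trans (by rw [ht]; rfl)
  exact ⟨⟨t, by rw [hb']; ring⟩, ⟨t + 1, by rw [hb']; ring⟩⟩

/- For `b ≠ 0` the descendants of `b` fill the open interval `(b - lowBit b, b + lowBit b)`,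
whose endpoints are multiples of `2 * lowBit b`; two such dyadic intervals are nested or
disjoint, which is `interval_subset`. -/
def IsDyadicAncestor (a b : ℕ) : Prop :=
  |(a : ℤ) - b| < lowBit b

namespace IsDyadicAncestor

theorem refl (a : ℕ) : IsDyadicAncestor a a := by
  simp [IsDyadicAncestor, lowBit_pos]

theorem eq_of_lowBit_le {a b : ℕ} (h : IsDyadicAncestor a b) (hle : lowBit b ≤ lowBit a) :
    a = b := by
  have hdvd : (lowBit b : ℤ) ∣ (a : ℤ) - b := by
    refine dvd_sub (Int.natCast_dvd_natCast.2 ?_) (Int.natCast_dvd_natCast.2 (lowBit_dvd b))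
    exact (lowBit_dvd_lowBit hle).trans (lowBit_dvd a)
  exact_mod_cast sub_eq_zero.1 (Int.eq_zero_of_abs_lt_dvd hdvd h)

theorem lowBit_lt {a b : ℕ} (h : IsDyadicAncestor a b) (hne : a ≠ b) : lowBit a < lowBit b :=
  lt_of_not_ge fun hle => hne (h.eq_of_lowBit_le hle)

theorem interval_subset {a y z : ℕ} (hy : IsDyadicAncestor a y) (hz : IsDyadicAncestor a z)
    (hy₀ : y ≠ 0) (hz₀ : z ≠ 0) (hle : lowBit y ≤ lowBit z) :
    (z : ℤ) - lowBit z ≤ y - lowBit y ∧ (y : ℤ) + lowBit y ≤ z + lowBit z := by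
  have hdvd : (2 * lowBit y : ℤ) ∣ 2 * lowBit z :=
    mul_dvd_mul_left 2 (by exact_mod_cast lowBit_dvd_lowBit hle)
  obtain ⟨hy₁, hy₂⟩ := two_mul_lowBit_dvd hy₀
  obtain ⟨hz₁, hz₂⟩ := two_mul_lowBit_dvd hz₀
  have := abs_lt.1 hy
  have := abs_lt.1 hz
  constructor
  · exact le_of_dvd_of_lt_of_le_add (a := a) hy₁ (dvd_trans hdvd hz₁) (by omega) (by omega)
  · have := le_of_dvd_of_lt_of_le_add (u := -(y + lowBit y)) (w := -(z + lowBit z)) (a := -a)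
      (dvd_neg.2 hy₂) (dvd_neg.2 (dvd_trans hdvd hz₂)) (by omega) (by omega)
    omega

theorem trans {x y z : ℕ} (hxy : IsDyadicAncestor x y) (hyz : IsDyadicAncestor y z)
    (hy₀ : y ≠ 0) (hz₀ : z ≠ 0) : IsDyadicAncestor x z := by
  rcases eq_or_ne y z with rfl | hne
  · exact hxy
  have := (refl y).interval_subset hyz hy₀ hz₀ (hyz.lowBit_lt hne).le
  have := abs_lt.1 hxy
  exact abs_lt.2 ⟨by omega, by omega⟩

theorem antisymm {a b : ℕ} (hab : IsDyadicAncestor a b) (hba : IsDyadicAncestor b a) : a = b := by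
  rcases le_total (lowBit a) (lowBit b) with h | h
  · exact (hba.eq_of_lowBit_le h).symm
  · exact hab.eq_of_lowBit_le h

theorem of_lowBit_le {a y z : ℕ} (hy : IsDyadicAncestor a y) (hz : IsDyadicAncestor a z)
    (hy₀ : y ≠ 0) (hz₀ : z ≠ 0) (hle : lowBit y ≤ lowBit z) : IsDyadicAncestor y z := by
  have := hy.interval_subset hz hy₀ hz₀ hle
  have : (0 : ℤ) < lowBit y := by exact_mod_cast lowBit_pos y
  exact abs_lt.2 ⟨by omega, by omega⟩

theorem total_of_common {a y z : ℕ} (hy : IsDyadicAncestor a y) (hz : IsDyadicAncestor a z)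
    (hy₀ : y ≠ 0) (hz₀ : z ≠ 0) : IsDyadicAncestor y z ∨ IsDyadicAncestor z y :=
  (le_total (lowBit y) (lowBit z)).imp (hy.of_lowBit_le hz hy₀ hz₀) (hz.of_lowBit_le hy hz₀ hy₀)

theorem comparable_succ {a : ℕ} (ha : a ≠ 0) :
    IsDyadicAncestor a (a + 1) ∨ IsDyadicAncestor (a + 1) a := by
  rcases Nat.even_or_odd a with he | ho
  · have := two_le_lowBit ha he.two_dvd
    exact Or.inr (by simp [IsDyadicAncestor]; omega)
  · have := two_le_lowBit a.add_one_ne_zero (ho.add_one).two_dvd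
    exact Or.inl (by simp [IsDyadicAncestor]; omega)

end IsDyadicAncestor

theorem isForestOrder_dyadicAncestor {V : Type} {f : V → ℕ} (hf : Function.Injective f)
    (hf₀ : ∀ x, f x ≠ 0) : IsForestOrder fun x y => IsDyadicAncestor (f x) (f y) :=
  ⟨fun x => .refl (f x), fun _ y z hxy hyz => hxy.trans hyz (hf₀ y) (hf₀ z),
    fun _ _ hxy hyx => hf (hxy.antisymm hyx),
    fun _ y z hy hz => hy.total_of_common hz (hf₀ y) (hf₀ z)⟩

theorem ncard_dyadicAncestors_add_one_le {V : Type} {f : V → ℕ} (hf : Function.Injective f)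
    (hf₀ : ∀ x, f x ≠ 0) {K : ℕ} (hK : ∀ x, f x < 2 ^ K) (x : V) :
    {y | IsDyadicAncestor (f x) (f y) ∧ y ≠ x}.ncard + 1 ≤ K := by
  have hK₁ : 1 ≤ K := Nat.one_le_iff_ne_zero.2 fun h => hf₀ x (by simpa [h] using hK x)
  have hcard := Set.ncard_le_ncard_of_injOn (fun y => (f y).factorization 2)
    (s := {y | IsDyadicAncestor (f x) (f y) ∧ y ≠ x}) (t := (Finset.Ico 1 K : Set ℕ)) ?_ ?_
    (Set.toFinite _)
  · rw [Set.ncard_coe_finset, Nat.card_Ico] at hcard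
    omega
  · rintro y ⟨hxy, hne⟩
    have hlt := hxy.lowBit_lt (hf.ne hne.symm)
    have hle : lowBit (f y) < 2 ^ K :=
      (Nat.le_of_dvd (Nat.pos_of_ne_zero (hf₀ y)) (lowBit_dvd (f y))).trans_lt (hK y)
    have hge : 2 ^ 0 < lowBit (f y) := lt_of_le_of_lt (lowBit_pos (f x)) hlt
    simp only [Finset.coe_Ico, Set.mem_Ico]
    exact ⟨(Nat.pow_lt_pow_iff_right one_lt_two).1 hge,
      (Nat.pow_lt_pow_iff_right one_lt_two).1 hle⟩
  · rintro y ⟨hy, -⟩ z ⟨hz, -⟩ hyz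
    have hlow : lowBit (f y) = lowBit (f z) := congrArg (2 ^ ·) hyz
    refine hf ((hy.total_of_common hz (hf₀ y) (hf₀ z)).elim (·.eq_of_lowBit_le hlow.ge) ?_)
    exact fun h => (h.eq_of_lowBit_le hlow.le).symm

theorem isChain_finRange_pathGraph (m : ℕ) :
    (List.finRange m).IsChain (SimpleGraph.pathGraph m).Adj := by
  rw [← List.ofFn_id, List.isChain_ofFn]
  intro i hi
  simp [SimpleGraph.pathGraph_adj]

theorem hasEliminationForest_pathGraph {m K : ℕ} (hm : m < 2 ^ K) :
    HasEliminationForest (SimpleGraph.pathGraph m) K := by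
  have hinj : Function.Injective fun x : Fin m => x.val + 1 :=
    fun x y h => Fin.ext (Nat.add_right_cancel h)
  refine ⟨_, isForestOrder_dyadicAncestor hinj (fun _ => Nat.add_one_ne_zero _), ?_,
    ncard_dyadicAncestors_add_one_le hinj (fun _ => Nat.add_one_ne_zero _) (fun x => by omega)⟩
  intro x y hxy
  rcases SimpleGraph.pathGraph_adj.1 hxy with h | h
  · simpa [← h] using IsDyadicAncestor.comparable_succ (Nat.add_one_ne_zero x.val)
  · simpa [← h, or_comm] using IsDyadicAncestor.comparable_succ (Nat.add_one_ne_zero y.val)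

/-- The path on `n+1` vertices (of length `n`) has tree-depth exactly `⌈log₂(n+2)⌉`. -/
theorem stmt_3 (n : ℕ) :
    treeDepth (SimpleGraph.pathGraph (n + 1)) = Nat.clog 2 (n + 2) := by
  set K := Nat.clog 2 (n + 2)
  have hK₀ : 0 < K := Nat.clog_pos one_lt_two (by omega)
  have hK : n + 2 ≤ 2 ^ K := Nat.le_pow_clog one_lt_two _
  have hK' : 2 ^ (K - 1) < n + 2 := Nat.pow_pred_clog_lt_self one_lt_two (x := n + 2) (by omega)
  have hforest := hasEliminationForest_pathGraph (m := n + 1) (K := K) (by omega)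
  refine le_antisymm (treeDepth_le hforest) ?_
  have hlen : 2 ^ (K - 1) ≤ (List.finRange (n + 1)).length := by simp; omega
  have := (hasEliminationForest_treeDepth hforest).lt_of_isChain (List.nodup_finRange _)
    (isChain_finRange_pathGraph _) hlen
  omega
end

section
/- If a graph G has tree-depth d, then G has a tree-model with 2^d colours and depth d; moreover, if G is connected, then G has a tree-model with 2^d colours and depth d−1. -/
/-- Length of the longest common prefix of `f` and `g` (as strings of length `d`). -/
def prefLen {d : ℕ} (f g : Fin d → ℕ) : ℕ :=
  Nat.findGreatest (fun k => ∀ i : Fin d, (i : ℕ) < k → f i = g i) d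

/-- A tree-model of `m` colours and depth `d` for the graph `G`:
a rooted tree of uniform root-to-leaf distance `d` whose leaves are exactly `V(G)`
(encoded by the injective map `f` sending each leaf to its root-to-leaf address),
a colouring of the leaves by `m` colours, and a symmetric signature `S` such that
two distinct vertices `u,v` are adjacent iff `(col u, col v, ℓ) ∈ S`, where `2ℓ`
is the tree-distance between `u` and `v` in the tree. -/
structure TreeModel {V : Type} (G : SimpleGraph V) (d m : ℕ) where
  f : V → Fin d → ℕ
  inj : Function.Injective f
  col : V → Fin m
  S : Fin m → Fin m → ℕ → Prop
  symm : ∀ i j l, S i j l → S j i l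
  adj : ∀ u v : V, u ≠ v →
    (G.Adj u v ↔ S (col u) (col v) (d - prefLen (f u) (f v)))

/-- `G ∈ TM(d,m)`. -/
def InTM (d m : ℕ) {V : Type} (G : SimpleGraph V) : Prop :=
  Nonempty (TreeModel G d m)

/-!
Take a rooted forest witnessing the tree-depth `d`, so every vertex has at most `d - 1` strict
ancestors and every edge joins a vertex to one of its ancestors. Give each vertex the leaf
address listing the labels of its root-to-vertex path, padded to length `d`; then `v` is a
strict ancestor of `u` exactly when the common prefix of their addresses has length
`depth v + 1`. Colour `u` by a `d`-bit word recording its depth and which of its ancestors it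
is adjacent to. For an edge `uv` with `v` above `u`, the common prefix length pins down `v`
among the ancestors of `u`, and the colour of `u` says whether `u` is adjacent to it; so
adjacency is a function of the two colours and the tree distance. If `G` is connected, all
vertices lie in one tree, all addresses share their first letter, and dropping it lowers the
depth by one.
-/

open Function

theorem prefLen_comm {d : ℕ} (f g : Fin d → ℕ) : prefLen f g = prefLen g f := by
  simp only [prefLen, eq_comm]

theorem prefLen_le {d : ℕ} (f g : Fin d → ℕ) : prefLen f g ≤ d :=
  Nat.findGreatest_le d

theorem le_prefLen_iff {d k : ℕ} {f g : Fin d → ℕ} (hk : k ≤ d) :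
    k ≤ prefLen f g ↔ ∀ i : Fin d, (i : ℕ) < k → f i = g i := by
  refine ⟨fun h i hi => ?_, fun h => Nat.le_findGreatest hk h⟩
  have hpos : prefLen f g ≠ 0 := by omega
  exact Nat.findGreatest_of_ne_zero (m := prefLen f g) rfl hpos i (by omega)

theorem prefLen_eq_prefLen_tail_add_one {d : ℕ} {f g : Fin (d + 1) → ℕ} (h0 : f 0 = g 0) :
    prefLen f g = prefLen (Fin.tail f) (Fin.tail g) + 1 := by
  have hsucc : ∀ k ≤ d, k + 1 ≤ prefLen f g ↔ k ≤ prefLen (Fin.tail f) (Fin.tail g) := by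
    intro k hk
    rw [le_prefLen_iff (by omega), le_prefLen_iff hk, Fin.forall_fin_succ]
    simp only [Fin.val_zero, Fin.val_succ, Nat.zero_lt_succ, Nat.succ_lt_succ_iff, h0,
      forall_const, true_and, Fin.tail]
  have hge := (hsucc _ (prefLen_le _ _)).2 le_rfl
  obtain ⟨p, hp⟩ : ∃ p, prefLen f g = p + 1 := ⟨prefLen f g - 1, by omega⟩
  have hle := (hsucc p (by have := prefLen_le f g; omega)).1 hp.ge
  omega

section TreeModel

variable {V C : Type} {d : ℕ}

def AdjDetermined (G : SimpleGraph V) (f : V → Fin d → ℕ) (col : V → C) : Prop :=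
  ∀ ⦃u v u' v' : V⦄, u ≠ v → u' ≠ v' → col u = col u' → col v = col v' →
    prefLen (f u) (f v) = prefLen (f u') (f v') → G.Adj u v → G.Adj u' v'

theorem inTM_of_adjDetermined {G : SimpleGraph V} {m : ℕ} {f : V → Fin d → ℕ}
    (hf : Injective f) {col : V → Fin m} (h : AdjDetermined G f col) : InTM d m G :=
  ⟨{ f, col
     inj := hf
     S := fun i j l => ∃ u v, u ≠ v ∧ col u = i ∧ col v = j ∧
       d - prefLen (f u) (f v) = l ∧ G.Adj u v
     symm := by
       rintro _ _ _ ⟨u, v, hne, rfl, rfl, rfl, huv⟩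
       exact ⟨v, u, hne.symm, rfl, rfl, by rw [prefLen_comm], huv.symm⟩
     adj := fun u v hne => by
       refine ⟨fun huv => ⟨u, v, hne, rfl, rfl, rfl, huv⟩, ?_⟩
       rintro ⟨u', v', hne', hu, hv, hl, huv'⟩
       have := prefLen_le (f u) (f v)
       have := prefLen_le (f u') (f v')
       exact h hne' hne hu hv (by omega) huv' }⟩

theorem AdjDetermined.comp {C' : Type} {G : SimpleGraph V} {f : V → Fin d → ℕ} {col : V → C}
    (h : AdjDetermined G f col) {e : C → C'} (he : Injective e) : AdjDetermined G f (e ∘ col) :=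
  fun _ _ _ _ hne hne' hu hv => h hne hne' (he hu) (he hv)

variable {f : V → Fin (d + 1) → ℕ}

theorem AdjDetermined.tail {G : SimpleGraph V} {col : V → C} (h0 : ∀ u v, f u 0 = f v 0)
    (h : AdjDetermined G f col) : AdjDetermined G (fun v => Fin.tail (f v)) col :=
  fun u v u' v' hne hne' hu hv hp => h hne hne' hu hv (by
    rw [prefLen_eq_prefLen_tail_add_one (h0 u v), prefLen_eq_prefLen_tail_add_one (h0 u' v'),
      hp])

theorem injective_tail_of_apply_zero_eq (h0 : ∀ u v, f u 0 = f v 0) (hf : Injective f) :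
    Injective (fun v => Fin.tail (f v)) := fun u v h => hf <| by
  rw [← Fin.cons_self_tail (f u), ← Fin.cons_self_tail (f v), h0 u v]
  exact congrArg _ h

end TreeModel

theorem SimpleGraph.Preconnected.eq_of_forall_adj {V α : Type} {G : SimpleGraph V}
    (hG : G.Preconnected) {f : V → α} (hf : ∀ u v, G.Adj u v → f u = f v) (u v : V) :
    f u = f v := by
  obtain ⟨w⟩ := hG u v
  induction w with
  | nil => rfl
  | cons h _ ih => exact (hf _ _ h).trans ih

namespace IsForestOrder

variable {V : Type} {le : V → V → Prop}

theorem of_injective {ι : V → ℕ} (hι : Injective ι) :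
    IsForestOrder (fun x y => ι x ≤ ι y) :=
  ⟨fun _ => le_rfl, fun _ _ _ => le_trans, fun _ _ hxy hyx => hι (le_antisymm hxy hyx),
    fun _ _ _ _ _ => le_total _ _⟩

variable (le) in
noncomputable def depth (v : V) : ℕ := {y | le v y ∧ y ≠ v}.ncard

variable (le) in
open Classical in
noncomputable def ancestorAt (v : V) (k : ℕ) : V :=
  if h : ∃ y, le v y ∧ depth le y = k then h.choose else v

theorem depth_add_one_le_card [Finite V] (v : V) : depth le v + 1 ≤ Nat.card V :=
  Set.ncard_lt_card fun h => (h.symm ▸ Set.mem_univ v : v ∈ {y | le v y ∧ y ≠ v}).2 rfl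

variable (hF : IsForestOrder le)
include hF

theorem refl (x : V) : le x x := hF.1 x

theorem trans {x y z : V} (hxy : le x y) (hyz : le y z) : le x z := hF.2.1 x y z hxy hyz

theorem antisymm {x y : V} (hxy : le x y) (hyx : le y x) : x = y := hF.2.2.1 x y hxy hyx

theorem total {x y z : V} (hxy : le x y) (hxz : le x z) : le y z ∨ le z y :=
  hF.2.2.2 x y z hxy hxz

variable [Finite V]

theorem depth_lt {x y : V} (hxy : le x y) (hne : y ≠ x) : depth le y < depth le x := by
  refine Set.ncard_lt_ncard ⟨fun w ⟨hyw, hwy⟩ => ⟨hF.trans hxy hyw, ?_⟩, fun hsub => ?_⟩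
    (Set.toFinite _)
  · rintro rfl
    exact hwy (hF.antisymm hxy hyw)
  · exact (hsub ⟨hxy, hne⟩).2 rfl

theorem depth_le {x y : V} (hxy : le x y) : depth le y ≤ depth le x := by
  rcases eq_or_ne y x with rfl | hne
  · exact le_rfl
  · exact (hF.depth_lt hxy hne).le

theorem eq_of_depth_eq {x y z : V} (hxy : le x y) (hxz : le x z)
    (h : depth le y = depth le z) : y = z := by
  by_contra hne
  rcases hF.total hxy hxz with hyz | hzy
  · exact (hF.depth_lt hyz (Ne.symm hne)).ne' h
  · exact (hF.depth_lt hzy hne).ne h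

theorem exists_ancestor_depth_eq {x : V} {k : ℕ} (hk : k ≤ depth le x) :
    ∃ y, le x y ∧ depth le y = k := by
  have hanc : {y | le x y} = insert x {y | le x y ∧ y ≠ x} := by
    ext y
    by_cases hyx : y = x
    · simp [hyx, hF.refl x]
    · simp [hyx]
  have hcard : {y | le x y}.ncard = depth le x + 1 := by
    rw [hanc, Set.ncard_insert_of_notMem (fun h => h.2 rfl)]
    rfl
  have himage : depth le '' {y | le x y} = Set.Iic (depth le x) := by
    refine Set.eq_of_subset_of_ncard_le ?_ ?_ (Set.toFinite _)
    · rintro _ ⟨y, hy, rfl⟩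
      exact hF.depth_le hy
    · have hinj : Set.InjOn (depth le) {y | le x y} := fun a ha b hb => hF.eq_of_depth_eq ha hb
      rw [Set.ncard_Iic_nat, hinj.ncard_image, hcard]
  obtain ⟨y, hy, rfl⟩ : k ∈ depth le '' {y | le x y} := himage ▸ Set.mem_Iic.2 hk
  exact ⟨y, hy, rfl⟩

theorem ancestorAt_spec {x : V} {k : ℕ} (hk : k ≤ depth le x) :
    le x (ancestorAt le x k) ∧ depth le (ancestorAt le x k) = k := by
  have h := hF.exists_ancestor_depth_eq hk
  rw [ancestorAt, dif_pos h]
  exact h.choose_spec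

theorem ancestorAt_depth {x y : V} (hxy : le x y) : ancestorAt le x (depth le y) = y :=
  have h := hF.ancestorAt_spec (hF.depth_le hxy)
  hF.eq_of_depth_eq h.1 hxy h.2

theorem ancestorAt_eq_of_le {x y : V} (hxy : le x y) {k : ℕ} (hk : k ≤ depth le y) :
    ancestorAt le x k = ancestorAt le y k := by
  have h := hF.ancestorAt_spec hk
  have := hF.ancestorAt_depth (hF.trans hxy h.1)
  rwa [h.2] at this

end IsForestOrder

theorem exists_forestOrder_of_treeDepth {V : Type} [Finite V] (G : SimpleGraph V) :
    ∃ le : V → V → Prop, IsForestOrder le ∧ (∀ x y, G.Adj x y → le x y ∨ le y x) ∧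
      ∀ x, IsForestOrder.depth le x + 1 ≤ treeDepth G := by
  obtain ⟨ι, hι⟩ := exists_injective_nat V
  exact Nat.sInf_mem (s := {n | ∃ le : V → V → Prop, IsForestOrder le ∧
      (∀ x y, G.Adj x y → le x y ∨ le y x) ∧ ∀ x, IsForestOrder.depth le x + 1 ≤ n})
    ⟨Nat.card V, _, IsForestOrder.of_injective hι, fun x y _ => le_total (ι x) (ι y),
      IsForestOrder.depth_add_one_le_card⟩

namespace IsForestOrder

variable {V : Type} {le : V → V → Prop}

-- Labels are shifted by one so that `0` can pad the path below `v`.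
variable (le) in
noncomputable def pathLabel (ι : V → ℕ) (v : V) (i : ℕ) : ℕ :=
  if i ≤ depth le v then ι (ancestorAt le v i) + 1 else 0

variable (le) in
noncomputable def leafAddr (ι : V → ℕ) (d : ℕ) (v : V) : Fin d → ℕ :=
  fun i => pathLabel le ι v i

variable (le) in
open Classical in
noncomputable def ancestorProfile (G : SimpleGraph V) (d : ℕ) (v : V) : Fin d → Bool :=
  fun j => decide ((j : ℕ) = depth le v ∨
    (j : ℕ) < depth le v ∧ G.Adj v (ancestorAt le v j))

variable {d : ℕ} {G : SimpleGraph V}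

theorem depth_le_of_ancestorProfile_eq {x y : V}
    (h : ancestorProfile le G d x = ancestorProfile le G d y) (hx : depth le x < d) :
    depth le x ≤ depth le y := by
  have := congrFun h ⟨depth le x, hx⟩
  simp only [ancestorProfile, true_or, decide_true, eq_comm (a := true), decide_eq_true_eq]
    at this
  omega

theorem depth_eq_of_ancestorProfile_eq {x y : V}
    (h : ancestorProfile le G d x = ancestorProfile le G d y) (hx : depth le x < d)
    (hy : depth le y < d) : depth le x = depth le y :=
  le_antisymm (depth_le_of_ancestorProfile_eq h hx) (depth_le_of_ancestorProfile_eq h.symm hy)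

theorem adj_ancestorAt_iff_of_ancestorProfile_eq {x y : V}
    (h : ancestorProfile le G d x = ancestorProfile le G d y) (hxy : depth le x = depth le y)
    {k : ℕ} (hk : k < depth le x) (hkd : k < d) :
    G.Adj x (ancestorAt le x k) ↔ G.Adj y (ancestorAt le y k) := by
  have := congrFun h ⟨k, hkd⟩
  simpa [ancestorProfile, hk, hk.ne, ← hxy] using this

variable {ι : V → ℕ}

theorem pathLabel_eq_zero_iff {x : V} {i : ℕ} : pathLabel le ι x i = 0 ↔ depth le x < i := by
  unfold pathLabel
  split_ifs with h
  · simp only [false_iff, not_lt, h]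
  · simpa using h

variable (hF : IsForestOrder le) [Finite V]
include hF

theorem pathLabel_eq_of_le {x y : V} (hxy : le x y) {i : ℕ} (hi : i ≤ depth le y) :
    pathLabel le ι x i = pathLabel le ι y i := by
  rw [pathLabel, pathLabel, if_pos hi, if_pos (hi.trans (hF.depth_le hxy)),
    hF.ancestorAt_eq_of_le hxy hi]

theorem le_of_pathLabel_depth_eq (hι : Injective ι) {x y : V}
    (h : pathLabel le ι x (depth le y) = pathLabel le ι y (depth le y)) : le x y := by
  rw [pathLabel, pathLabel, if_pos le_rfl, hF.ancestorAt_depth (hF.refl y)] at h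
  split_ifs at h with hyx
  rw [← hι (Nat.succ_injective h)]
  exact (hF.ancestorAt_spec hyx).1

theorem leafAddr_zero_eq_of_preconnected (hG : ∀ x y, G.Adj x y → le x y ∨ le y x)
    (hconn : G.Preconnected) (u v : V) : leafAddr le ι (d + 1) u 0 = leafAddr le ι (d + 1) v 0 :=
  hconn.eq_of_forall_adj (fun u v huv => (hG u v huv).elim
    (fun h => hF.pathLabel_eq_of_le h (Nat.zero_le _))
    (fun h => (hF.pathLabel_eq_of_le h (Nat.zero_le _)).symm)) u v

variable (hι : Injective ι) (hd : ∀ v, depth le v + 1 ≤ d)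
include hι hd

theorem leafAddr_injective : Injective (leafAddr le ι d) := by
  have hle : ∀ x y, leafAddr le ι d x = leafAddr le ι d y → le x y := fun x y h =>
    hF.le_of_pathLabel_depth_eq hι (congrFun h ⟨depth le y, hd y⟩)
  exact fun x y h => hF.antisymm (hle x y h) (hle y x h.symm)

theorem prefLen_leafAddr_eq_iff {x y : V} (hne : x ≠ y) :
    prefLen (leafAddr le ι d x) (leafAddr le ι d y) = depth le y + 1 ↔ le x y := by
  refine ⟨fun h => hF.le_of_pathLabel_depth_eq hι
    ((le_prefLen_iff (hd y)).1 h.ge ⟨depth le y, hd y⟩ (Nat.lt_succ_self _)), fun hxy => ?_⟩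
  have hlt := hF.depth_lt hxy hne.symm
  refine le_antisymm (not_lt.1 fun h => ?_)
    ((le_prefLen_iff (hd y)).2 fun i hi => hF.pathLabel_eq_of_le hxy (Nat.le_of_lt_succ hi))
  -- at level `depth y + 1` the path to `x` continues while the one to `y` has stopped
  have hdx := hd x
  have heq : pathLabel le ι x (depth le y + 1) = pathLabel le ι y (depth le y + 1) :=
    (le_prefLen_iff (by omega)).1 h ⟨depth le y + 1, by omega⟩ (Nat.lt_succ_self _)
  have hy : pathLabel le ι y (depth le y + 1) = 0 := pathLabel_eq_zero_iff.2 (Nat.lt_succ_self _)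
  exact pathLabel_eq_zero_iff.not.2 (by omega) (heq.trans hy)

theorem adjDetermined_leafAddr_ancestorProfile (hG : ∀ x y, G.Adj x y → le x y ∨ le y x) :
    AdjDetermined G (leafAddr le ι d) (ancestorProfile le G d) := by
  intro u v u' v' hne hne' hu hv hp huv
  wlog hle : le u v generalizing u v u' v'
  · rw [prefLen_comm, prefLen_comm (leafAddr le ι d u')] at hp
    exact (this hne.symm hne'.symm hv hu hp huv.symm ((hG u v huv).resolve_left hle)).symm
  have hdu := depth_eq_of_ancestorProfile_eq hu (hd u) (hd u')
  have hdv := depth_eq_of_ancestorProfile_eq hv (hd v) (hd v')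
  have hle' : le u' v' := (hF.prefLen_leafAddr_eq_iff hι hd hne').1 <| by
    rw [← hp, (hF.prefLen_leafAddr_eq_iff hι hd hne).2 hle, hdv]
  have hlt := hF.depth_lt hle hne.symm
  rw [← hF.ancestorAt_depth hle', ← hdv,
    ← adj_ancestorAt_iff_of_ancestorProfile_eq hu hdu hlt (hd v), hF.ancestorAt_depth hle]
  exact huv

end IsForestOrder

/-- If `G` has tree-depth `d`, then `G ∈ TM(d, 2^d)`; if moreover `G` is connected,
then `G ∈ TM(d−1, 2^d)`. -/
theorem stmt_4 {V : Type} [Fintype V] (G : SimpleGraph V) (d : ℕ)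
    (h : treeDepth G = d) :
    InTM d (2 ^ d) G ∧ (G.Connected → InTM (d - 1) (2 ^ d) G) := by
  obtain ⟨le, hF, hG, hd⟩ := exists_forestOrder_of_treeDepth G
  rw [h] at hd
  obtain ⟨ι, hι⟩ := exists_injective_nat V
  let e : (Fin d → Bool) ≃ Fin (2 ^ d) := Fintype.equivFinOfCardEq (by simp)
  have hdet := (hF.adjDetermined_leafAddr_ancestorProfile hι hd hG).comp e.injective
  refine ⟨inTM_of_adjDetermined (hF.leafAddr_injective hι hd) hdet, fun hconn => ?_⟩
  obtain ⟨x⟩ := hconn.nonempty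
  obtain ⟨d, rfl⟩ : ∃ d', d = d' + 1 := ⟨d - 1, by have := hd x; omega⟩
  have h0 := hF.leafAddr_zero_eq_of_preconnected (ι := ι) (d := d) hG hconn.preconnected
  exact inTM_of_adjDetermined
    (injective_tail_of_apply_zero_eq h0 (hF.leafAddr_injective hι hd)) (hdet.tail h0)
end

section
/- For ℓ = 3·2^m − 4, the path P_ℓ of length ℓ (on ℓ+1 vertices) has a tree-model with m colours and depth 2m+1, i.e., P_ℓ ∈ TM(2m+1, m). -/
/-!
Doubling. Let `T` be a tree-model of depth `d` of a path `P` whose two end leaves are only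
children, `e` one end of `P`. Below a new root, one child carries two copies of `T` in two
sub-branches and the other a single leaf `y`; each copy of `e` gets a new sibling leaf of a new
colour `c`, and these two are joined to `y`. Adding `(c, col e, 1)` and `(c, c, d + 2)` to the
signature gives a model of depth `d + 2` of the path formed by the two copies of `P` and the
three new vertices; its ends, the copies of the other end of `P`, are still only children.
Starting from `P_2` (depth 3, one colour), this takes `P_ℓ` to `P_{2ℓ+4}`.
-/

section SplitLevel

variable {D : ℕ}

theorem prefLen_eq_iff {a b : Fin D → ℕ} {k : ℕ} :
    prefLen a b = k ↔ k ≤ D ∧ (∀ i : Fin D, (i : ℕ) < k → a i = b i) ∧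
      ∀ h : k < D, a ⟨k, h⟩ ≠ b ⟨k, h⟩ := by
  rw [prefLen, Nat.findGreatest_eq_iff]
  refine and_congr_right fun hkD => ⟨fun ⟨hk, hgt⟩ => ?_, fun ⟨hk, hne⟩ => ?_⟩
  · have hk' : ∀ i : Fin D, (i : ℕ) < k → a i = b i := by
      rcases Nat.eq_zero_or_pos k with rfl | hpos
      · simp
      · exact hk hpos.ne'
    refine ⟨hk', fun h heq => hgt (Nat.lt_succ_self k) h fun i hi => ?_⟩
    rcases Nat.lt_succ_iff_lt_or_eq.1 hi with hi | hi
    · exact hk' i hi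
    · exact (Fin.ext hi : i = ⟨k, h⟩) ▸ heq
  · exact ⟨fun _ => hk, fun n hkn hnD hP => hne (by omega) (hP ⟨k, by omega⟩ hkn)⟩

/-- Half the tree-distance between the leaves with root-to-leaf addresses `a` and `b`. -/
def splitLevel (a b : Fin D → ℕ) : ℕ := D - prefLen a b

theorem splitLevel_comm (a b : Fin D → ℕ) : splitLevel a b = splitLevel b a := by
  have h := prefLen_eq_iff.1 (rfl : prefLen a b = _)
  rw [splitLevel, splitLevel, prefLen_eq_iff.2 ⟨h.1, fun i hi => (h.2.1 i hi).symm,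
    fun hk => (h.2.2 hk).symm⟩]

theorem splitLevel_le (a b : Fin D → ℕ) : splitLevel a b ≤ D := Nat.sub_le _ _

theorem splitLevel_self (a : Fin D → ℕ) : splitLevel a a = 0 := by
  rw [splitLevel, prefLen_eq_iff.2 ⟨le_rfl, fun _ _ => rfl, fun h => absurd h (lt_irrefl _)⟩,
    Nat.sub_self]

theorem splitLevel_cons_cons (x : ℕ) (a b : Fin D → ℕ) :
    splitLevel (Fin.cons x a : Fin (D + 1) → ℕ) (Fin.cons x b) = splitLevel a b := by
  obtain ⟨hkD, hagree, hne⟩ := prefLen_eq_iff.1 (rfl : prefLen a b = _)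
  have : prefLen (Fin.cons x a : Fin (D + 1) → ℕ) (Fin.cons x b) = prefLen a b + 1 := by
    refine prefLen_eq_iff.2 ⟨by omega, fun i hi => ?_, fun h => ?_⟩
    · cases i using Fin.cases with
      | zero => rfl
      | succ j => exact hagree j (by simpa using hi)
    · have hsucc : (⟨prefLen a b + 1, h⟩ : Fin (D + 1)) =
          Fin.succ ⟨prefLen a b, by omega⟩ := rfl
      simpa only [hsucc, Fin.cons_succ] using hne (by omega)
  rw [splitLevel, splitLevel, this]; omega

theorem splitLevel_cons_cons_of_ne {x y : ℕ} (hxy : x ≠ y) (a b : Fin D → ℕ) :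
    splitLevel (Fin.cons x a : Fin (D + 1) → ℕ) (Fin.cons y b) = D + 1 := by
  rw [splitLevel, prefLen_eq_iff.2 ⟨Nat.zero_le _, fun _ h => absurd h (Nat.not_lt_zero _),
    fun _ => by simpa using hxy⟩]; rfl

def sibling (a : Fin (D + 1) → ℕ) : Fin (D + 1) → ℕ :=
  Function.update a (Fin.last D) (a (Fin.last D) + 1)

theorem splitLevel_sibling_self (a : Fin (D + 1) → ℕ) : splitLevel (sibling a) a = 1 := by
  have : prefLen (sibling a) a = D := by
    refine prefLen_eq_iff.2 ⟨by omega, fun i hi => ?_, fun _ => ?_⟩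
    · exact Function.update_of_ne (Fin.ne_of_lt hi) _ _
    · change sibling a (Fin.last D) ≠ a (Fin.last D)
      simp [sibling]
  rw [splitLevel, this]; omega

theorem splitLevel_sibling_of_two_le {a b : Fin (D + 1) → ℕ} (h : 2 ≤ splitLevel a b) :
    splitLevel (sibling a) b = splitLevel a b := by
  obtain ⟨hkD, hagree, hne⟩ := prefLen_eq_iff.1 (rfl : prefLen a b = _)
  have hk : prefLen a b < D := by unfold splitLevel at h; omega
  have : prefLen (sibling a) b = prefLen a b := by
    refine prefLen_eq_iff.2 ⟨hkD, fun i hi => ?_, fun h' => ?_⟩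
    · rw [sibling, Function.update_of_ne (by rw [Ne, Fin.ext_iff]; simp; omega)]
      exact hagree i hi
    · rw [sibling, Function.update_of_ne (by rw [Ne, Fin.ext_iff]; simp; omega)]
      exact hne h'
  rw [splitLevel, splitLevel, this]

end SplitLevel

namespace TreeModel

variable {V W : Type} {G : SimpleGraph V} {H : SimpleGraph W} {d m : ℕ}

def level (T : TreeModel G d m) (u v : V) : ℕ := splitLevel (T.f u) (T.f v)

theorem adj_iff (T : TreeModel G d m) {u v : V} (huv : u ≠ v) :
    G.Adj u v ↔ T.S (T.col u) (T.col v) (T.level u v) :=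
  T.adj u v huv

/-- The leaf `v` is the only child of its parent. -/
def IsOnlyChild (T : TreeModel G d m) (v : V) : Prop := ∀ u, u ≠ v → 2 ≤ T.level v u

def comap (T : TreeModel H d m) (φ : G ↪g H) : TreeModel G d m where
  f := T.f ∘ φ
  inj := T.inj.comp φ.injective
  col := T.col ∘ φ
  S := T.S
  symm := T.symm
  adj _ _ huv := φ.map_adj_iff.symm.trans (T.adj _ _ (φ.injective.ne huv))

theorem IsOnlyChild.comap {T : TreeModel H d m} (φ : G ↪g H) {v : V}
    (h : T.IsOnlyChild (φ v)) : (T.comap φ).IsOnlyChild v :=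
  fun u hu => h (φ u) (φ.injective.ne hu)

end TreeModel

inductive Doubled (V : Type) : Type
  | left (v : V)
  | hingeLeft
  | apex
  | hingeRight
  | right (v : V)

namespace Doubled

variable {V : Type}

def graph (G : SimpleGraph V) (e : V) : SimpleGraph (Doubled V) where
  Adj
    | left u, left v | right u, right v => G.Adj u v
    | left v, hingeLeft | hingeLeft, left v | right v, hingeRight | hingeRight, right v => v = e
    | hingeLeft, apex | apex, hingeLeft | apex, hingeRight | hingeRight, apex => True
    | _, _ => False
  symm := ⟨by intro p q; cases p <;> cases q <;> simp [G.adj_comm]⟩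
  loopless := ⟨by intro p; cases p <;> simp⟩

end Doubled

namespace TreeModel

variable {V : Type} {G : SimpleGraph V} {d m : ℕ}

open Doubled

def doubledAddr (T : TreeModel G (d + 1) m) (e : V) : Doubled V → Fin (d + 3) → ℕ
  | left v => Fin.cons 0 (Fin.cons 0 (T.f v))
  | hingeLeft => Fin.cons 0 (Fin.cons 0 (sibling (T.f e)))
  | apex => Fin.cons 1 0
  | hingeRight => Fin.cons 0 (Fin.cons 1 (sibling (T.f e)))
  | right v => Fin.cons 0 (Fin.cons 1 (T.f v))

def doubledCol (T : TreeModel G d m) : Doubled V → Fin (m + 1)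
  | left v | right v => (T.col v).castSucc
  | _ => Fin.last m

/-- The bound `l ≤ d + 1` keeps entries of `T.S` at unrealised levels from joining the two
copies, which split at level `d + 2`. -/
def doubledSig (T : TreeModel G (d + 1) m) (e : V) (i j : Fin (m + 1)) (l : ℕ) : Prop :=
  (∃ i' j', i = i'.castSucc ∧ j = j'.castSucc ∧ T.S i' j' l ∧ l ≤ d + 1) ∨
  (l = 1 ∧ (i = Fin.last m ∧ j = (T.col e).castSucc ∨
    i = (T.col e).castSucc ∧ j = Fin.last m)) ∨
  (l = d + 3 ∧ i = Fin.last m ∧ j = Fin.last m)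

theorem IsOnlyChild.splitLevel_sibling_eq_one_iff {T : TreeModel G (d + 1) m} {e : V}
    (he : T.IsOnlyChild e) {v : V} : splitLevel (sibling (T.f e)) (T.f v) = 1 ↔ v = e := by
  refine ⟨fun h => ?_, fun h => h ▸ splitLevel_sibling_self _⟩
  by_contra hv
  have h2 := he v hv
  rw [level, ← splitLevel_sibling_of_two_le h2] at h2
  omega

theorem IsOnlyChild.sibling_ne {T : TreeModel G (d + 1) m} {e : V} (he : T.IsOnlyChild e)
    (v : V) : sibling (T.f e) ≠ T.f v := by
  intro h
  have h1 : splitLevel (sibling (T.f e)) (T.f v) = 0 := by rw [h, splitLevel_self]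
  by_cases hv : v = e
  · rw [hv, splitLevel_sibling_self] at h1; omega
  · have h2 := he v hv
    rw [level, ← splitLevel_sibling_of_two_le h2] at h2
    omega

theorem adj_iff_doubledSig (T : TreeModel G (d + 1) m) {e : V} (he : T.IsOnlyChild e)
    {p q : Doubled V} (hpq : p ≠ q) :
    (Doubled.graph G e).Adj p q ↔ T.doubledSig e (T.doubledCol p) (T.doubledCol q)
      (splitLevel (T.doubledAddr e p) (T.doubledAddr e q)) := by
  have hlast (i : Fin m) : Fin.last m ≠ i.castSucc := (Fin.castSucc_ne_last i).symm
  cases p <;> cases q <;>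
    simp [Doubled.graph, doubledAddr, doubledCol, doubledSig, splitLevel_cons_cons,
      splitLevel_cons_cons_of_ne, splitLevel_comm _ (sibling _), hlast,
      he.splitLevel_sibling_eq_one_iff] at hpq ⊢
  all_goals first
    | rw [and_iff_left (splitLevel_le _ _)]; exact T.adj_iff hpq
    | rintro rfl; rfl

def double (T : TreeModel G (d + 1) m) (e : V) (he : T.IsOnlyChild e) :
    TreeModel (Doubled.graph G e) (d + 3) (m + 1) where
  f := T.doubledAddr e
  inj p q h := by
    cases p <;> cases q <;>
      simp [doubledAddr, Fin.cons_inj, he.sibling_ne, (he.sibling_ne _).symm] at h ⊢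
    all_goals exact T.inj h
  col := T.doubledCol
  S := T.doubledSig e
  symm i j l := by
    rintro (⟨i', j', rfl, rfl, hS, hl⟩ | ⟨rfl, h | h⟩ | ⟨rfl, rfl, rfl⟩)
    · exact Or.inl ⟨j', i', rfl, rfl, T.symm _ _ _ hS, hl⟩
    · exact Or.inr (Or.inl ⟨rfl, Or.inr h.symm⟩)
    · exact Or.inr (Or.inl ⟨rfl, Or.inl h.symm⟩)
    · exact Or.inr (Or.inr ⟨rfl, rfl, rfl⟩)
  adj _ _ hpq := T.adj_iff_doubledSig he hpq

theorem IsOnlyChild.double {T : TreeModel G (d + 1) m} {e v : V} (he : T.IsOnlyChild e)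
    (hv : T.IsOnlyChild v) (hve : v ≠ e) :
    (T.double e he).IsOnlyChild (left v) ∧ (T.double e he).IsOnlyChild (right v) := by
  have hsib : 2 ≤ splitLevel (T.f v) (sibling (T.f e)) := by
    rw [splitLevel_comm, splitLevel_sibling_of_two_le (he v hve)]; exact he v hve
  constructor <;> intro q hq <;> cases q <;>
    simp [TreeModel.double, level, doubledAddr, splitLevel_cons_cons,
      splitLevel_cons_cons_of_ne, hsib] at hq ⊢
  all_goals first | omega | exact hv _ hq

end TreeModel

open Doubled SimpleGraph

def pathToDoubled (k : ℕ) (i : Fin (2 * k + 4 + 1)) : Doubled (Fin (k + 1)) :=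
  if hr : k + 3 < (i : ℕ) then right ⟨2 * k + 4 - i, by omega⟩
  else if hl : (i : ℕ) ≤ k then left ⟨i, by omega⟩
  else if (i : ℕ) = k + 1 then hingeLeft
  else if (i : ℕ) = k + 2 then apex
  else hingeRight

theorem pathToDoubled_injective (k : ℕ) : Function.Injective (pathToDoubled k) := by
  intro i j h
  rw [pathToDoubled, pathToDoubled] at h
  split_ifs at h <;> simp [Fin.ext_iff] at h ⊢ <;> omega

def pathEmbeddingDoubled (k : ℕ) :
    pathGraph (2 * k + 4 + 1) ↪g Doubled.graph (pathGraph (k + 1)) (Fin.last k) where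
  toFun := pathToDoubled k
  inj' := pathToDoubled_injective k
  map_rel_iff' {i j} := by
    simp only [Function.Embedding.coeFn_mk, pathToDoubled]
    split_ifs <;> simp [Doubled.graph, pathGraph_adj, Fin.ext_iff] <;> omega

theorem pathEmbeddingDoubled_zero (k : ℕ) : pathEmbeddingDoubled k 0 = left 0 := by
  simp [pathEmbeddingDoubled, pathToDoubled]

theorem pathEmbeddingDoubled_last (k : ℕ) :
    pathEmbeddingDoubled k (Fin.last _) = right 0 := by
  simp only [pathEmbeddingDoubled, RelEmbedding.coe_mk, Function.Embedding.coeFn_mk,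
    pathToDoubled, Fin.val_last]
  rw [dif_pos (by omega)]
  simp

theorem TreeModel.exists_doubled_path {k d m : ℕ} (hk : k ≠ 0)
    (T : TreeModel (pathGraph (k + 1)) (d + 1) m)
    (h0 : T.IsOnlyChild 0) (hlast : T.IsOnlyChild (Fin.last k)) :
    ∃ T' : TreeModel (pathGraph (2 * k + 4 + 1)) (d + 3) (m + 1),
      T'.IsOnlyChild 0 ∧ T'.IsOnlyChild (Fin.last _) := by
  obtain ⟨h0l, h0r⟩ := hlast.double h0 (by simp [Fin.ext_iff, Ne.symm hk])
  refine ⟨(T.double _ hlast).comap (pathEmbeddingDoubled k), IsOnlyChild.comap _ ?_,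
    IsOnlyChild.comap _ ?_⟩
  · rwa [pathEmbeddingDoubled_zero]
  · rwa [pathEmbeddingDoubled_last]

def pathThreeModel : TreeModel (pathGraph 3) 3 1 where
  f := ![![0, 0, 0], ![1, 0, 0], ![0, 1, 0]]
  inj := by decide
  col _ := 0
  S _ _ l := l = 3
  symm _ _ _ := id
  adj := by
    intro u v huv
    rw [pathGraph_adj]
    revert u v
    decide

theorem exists_pathModel (m : ℕ) (hm : 1 ≤ m) :
    ∃ T : TreeModel (pathGraph (3 * 2 ^ m - 4 + 1)) (2 * m + 1) m,
      T.IsOnlyChild 0 ∧ T.IsOnlyChild (Fin.last _) := by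
  induction m, hm using Nat.le_induction with
  | base =>
    refine ⟨pathThreeModel, ?_, ?_⟩ <;>
      unfold TreeModel.IsOnlyChild TreeModel.level <;> decide
  | succ m hm ih =>
    obtain ⟨T, h0, hlast⟩ := ih
    have hpow : 2 ≤ 2 ^ m := Nat.le_self_pow (by omega) 2
    have hlen : 3 * 2 ^ (m + 1) - 4 = 2 * (3 * 2 ^ m - 4) + 4 := by rw [pow_succ]; omega
    rw [hlen, show 2 * (m + 1) + 1 = 2 * m + 3 by ring]
    exact T.exists_doubled_path (by omega) h0 hlast

/-- For `ℓ = 3·2^m − 4`, the path `P_ℓ` of length `ℓ` (on `ℓ+1` vertices) is in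
`TM(2m+1, m)`. -/
theorem stmt_12 (m : ℕ) (hm : 1 ≤ m) :
    InTM (2 * m + 1) m (SimpleGraph.pathGraph (3 * 2 ^ m - 4 + 1)) := by
  obtain ⟨T, -⟩ := exists_pathModel m hm
  exact ⟨T⟩
end

section
/- For every d and m there exists a finite set of graphs F such that a graph G belongs to TM(d,m) if and only if no induced subgraph of G is isomorphic to a member of F. -/
/-!
A tree-model of depth `d` is a labelled rooted tree; written as nested lists of subtrees, such
trees are well-quasi-ordered by Higman's lemma, and a tree embedding turns into an induced
subgraph embedding as soon as the two signatures agree on the finitely many relevant levels.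
Hence `TM(d,m)` is well-quasi-ordered by induced subgraphs. Deleting a vertex from a minimal
non-member of `TM(d,m)` leaves a member, and the vertex can be put back on a new root branch,
so all minimal non-members lie in the well-quasi-ordered class `TM(d+1,2m+1)`: finitely many
of them are below all the others.
-/

section prefLen

variable {d : ℕ}

theorem prefLen_self (f : Fin d → ℕ) : prefLen f f = d :=
  Nat.findGreatest_eq fun _ _ => rfl

theorem prefLen_spec (f g : Fin d → ℕ) : ∀ i : Fin d, (i : ℕ) < prefLen f g → f i = g i :=
  Nat.findGreatest_spec (P := fun k => ∀ i : Fin d, (i : ℕ) < k → f i = g i) (Nat.zero_le d)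
    fun _ hi => absurd hi (Nat.not_lt_zero _)

theorem eq_of_prefLen_eq {f g : Fin d → ℕ} (h : prefLen f g = d) : f = g :=
  funext fun i => prefLen_spec f g i (h.symm ▸ i.isLt)

theorem prefLen_cons (a b : ℕ) (x y : Fin d → ℕ) :
    prefLen (Fin.cons a x : Fin (d + 1) → ℕ) (Fin.cons b y) =
      if a = b then prefLen x y + 1 else 0 := by
  unfold prefLen
  split_ifs with hab
  · subst hab
    refine Nat.findGreatest_eq_iff.2 ⟨Nat.succ_le_succ (Nat.findGreatest_le d), fun _ => ?_, ?_⟩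
    · intro i hi
      refine Fin.cases (fun _ => rfl) (fun j hj => ?_) i hi
      rw [Fin.cons_succ, Fin.cons_succ]
      exact prefLen_spec x y j (Nat.succ_lt_succ_iff.1 hj)
    · rintro (_ | n) hn hnd hP
      · omega
      refine Nat.findGreatest_is_greatest (Nat.lt_of_succ_lt_succ hn) (by omega) fun j hj => ?_
      simpa using hP j.succ (by simpa using hj)
  · refine Nat.findGreatest_eq_zero_iff.2 fun n hn _ hP => hab ?_
    simpa using hP 0 hn

theorem prefLen_eq_ite (x y : Fin (d + 1) → ℕ) :
    prefLen x y = if x 0 = y 0 then prefLen (Fin.tail x) (Fin.tail y) + 1 else 0 := by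
  conv_lhs => rw [← Fin.cons_self_tail x, ← Fin.cons_self_tail y]
  exact prefLen_cons _ _ _ _

end prefLen

theorem List.SublistForall₂.exists_injective {α β : Type*} {r : α → β → Prop}
    {l₁ : List α} {l₂ : List β} (h : List.SublistForall₂ r l₁ l₂) :
    ∃ σ : ℕ → ℕ, σ.Injective ∧
      ∀ i (hi : i < l₁.length), ∃ hσ : σ i < l₂.length, r l₁[i] l₂[σ i] := by
  induction h with
  | nil => exact ⟨id, Function.injective_id, fun i hi => absurd hi (Nat.not_lt_zero _)⟩
  | cons hr _ ih =>
    obtain ⟨σ, hσ, hr'⟩ := ih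
    refine ⟨fun | 0 => 0 | i + 1 => σ i + 1, ?_, ?_⟩
    · rintro (_ | i) (_ | j) hij <;> simp_all [hσ.eq_iff]
    · rintro (_ | i) hi
      · exact ⟨by simp, hr⟩
      · obtain ⟨hσi, h⟩ := hr' i (by simpa using hi)
        exact ⟨by simpa using hσi, h⟩
  | cons_right _ ih =>
    obtain ⟨σ, hσ, hr'⟩ := ih
    refine ⟨fun i => σ i + 1, fun i j hij => hσ (Nat.succ_injective hij), fun i hi => ?_⟩
    obtain ⟨hσi, h⟩ := hr' i hi
    exact ⟨by simpa using hσi, h⟩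

theorem Set.PartiallyWellOrderedOn.exists_fin_basis {α : Type*} {s : Set α}
    {r : α → α → Prop} (h : s.PartiallyWellOrderedOn r) :
    ∃ (k : ℕ) (F : Fin k → α), (∀ i, F i ∈ s) ∧ ∀ x ∈ s, ∃ i, r (F i) x := by
  by_contra! H
  obtain ⟨f, hfs, hbad⟩ := exists_seq_of_forall_finset_exists (· ∈ s) (fun x y => ¬ r x y)
    fun F hF => by
      obtain ⟨x, hx, hnot⟩ := H F.card (fun i => F.equivFin.symm i) fun i => hF _ (by simp)
      refine ⟨x, hx, fun y hy => ?_⟩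
      simpa using hnot (F.equivFin ⟨y, hy⟩)
  obtain ⟨m, n, hmn, hr⟩ := h.exists_lt hfs
  exact hbad m n hmn hr

/-- A depth-`0` tree is the set of colours sitting at its (unique) leaf address; a depth-`d + 1`
tree is the list of the subtrees of its root, the `i`-th one carrying the addresses starting
with `i`. Empty subtrees are allowed. -/
abbrev LabelledTree (m : ℕ) : ℕ → Type
  | 0 => Set (Fin m)
  | d + 1 => List (LabelledTree m d)

namespace LabelledTree

variable {m : ℕ}

def leaves : ∀ {d : ℕ}, LabelledTree m d → Set ((Fin d → ℕ) × Fin m)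
  | 0, s => {x | x.2 ∈ (s : Set (Fin m))}
  | d + 1, l => {x | ∃ h : x.1 0 < List.length (α := LabelledTree m d) l,
      (Fin.tail x.1, x.2) ∈ leaves (l[x.1 0]'h)}

def Embeds : ∀ {d : ℕ}, LabelledTree m d → LabelledTree m d → Prop
  | 0, s, t => (s : Set (Fin m)) ⊆ t
  | _ + 1, l₁, l₂ => List.SublistForall₂ Embeds l₁ l₂

instance isPreorder_embeds : ∀ d, IsPreorder (LabelledTree m d) Embeds
  | 0 => inferInstanceAs (IsPreorder (Set (Fin m)) (· ⊆ ·))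
  | d + 1 =>
    have := isPreorder_embeds d
    @IsPreorder.mk (List (LabelledTree m d)) (List.SublistForall₂ Embeds) _ _

theorem partiallyWellOrderedOn_embeds :
    ∀ d, (Set.univ : Set (LabelledTree m d)).PartiallyWellOrderedOn Embeds
  | 0 =>
    have := isPreorder_embeds (m := m) 0
    (Set.finite_univ : (Set.univ : Set (LabelledTree m 0)).Finite).partiallyWellOrderedOn
  | d + 1 => (Set.PartiallyWellOrderedOn.partiallyWellOrderedOn_sublistForall₂ _
      (partiallyWellOrderedOn_embeds d)).mono fun _ _ x _ => Set.mem_univ x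

theorem exists_leaves_eq : ∀ {d : ℕ} (P : Set ((Fin d → ℕ) × Fin m)), P.Finite →
    ∃ t : LabelledTree m d, leaves t = P
  | 0, P, _ => by
    refine ⟨(Prod.snd '' P : Set (Fin m)), Set.ext fun x => ⟨?_, fun hx => ⟨x, hx, rfl⟩⟩⟩
    rintro ⟨y, hy, hyx⟩
    rwa [← Prod.ext (Subsingleton.elim y.1 x.1) hyx]
  | d + 1, P, hP => by
    obtain ⟨N, hN⟩ := (hP.image fun x => x.1 0).bddAbove
    have hfib : ∀ k : ℕ, ∃ t : LabelledTree m d, leaves t = {y | (Fin.cons k y.1, y.2) ∈ P} :=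
      fun k => exists_leaves_eq _ <| hP.preimage fun y _ z _ h => by
        simpa [Prod.ext_iff, Fin.cons_inj] using h
    choose t ht using hfib
    refine ⟨List.ofFn fun k : Fin (N + 1) => t k, Set.ext fun x => ?_⟩
    simp only [leaves, List.length_ofFn, List.getElem_ofFn, ht, Fin.cons_self_tail,
      Set.mem_ofPred_eq, exists_prop, and_iff_right_iff_imp]
    exact fun hx => Nat.lt_succ_of_le (hN ⟨x, hx, rfl⟩)

def IsLeafMap {d : ℕ} (g : (Fin d → ℕ) → Fin d → ℕ) (P Q : Set ((Fin d → ℕ) × Fin m)) : Prop :=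
  (∀ x ∈ P, (g x.1, x.2) ∈ Q) ∧ ∀ x ∈ P, ∀ y ∈ P, prefLen (g x.1) (g y.1) = prefLen x.1 y.1

theorem exists_isLeafMap_of_embeds : ∀ {d : ℕ} {s t : LabelledTree m d}, Embeds s t →
    ∃ g, IsLeafMap g (leaves s) (leaves t)
  | 0, _, _, h => ⟨id, fun x hx => h hx, fun _ _ _ _ => rfl⟩
  | d + 1, l₁, l₂, h => by
    obtain ⟨σ, hσ, hr⟩ := List.SublistForall₂.exists_injective (r := Embeds) h
    have hsub : ∀ i, ∃ g, ∀ hi : i < List.length (α := LabelledTree m d) l₁,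
        ∃ hσi : σ i < List.length (α := LabelledTree m d) l₂,
          IsLeafMap g (leaves (l₁[i]'hi)) (leaves (l₂[σ i]'hσi)) := fun i => by
      by_cases hi : i < List.length (α := LabelledTree m d) l₁
      · obtain ⟨hσi, hemb⟩ := hr i hi
        obtain ⟨g, hg⟩ := exists_isLeafMap_of_embeds hemb
        exact ⟨g, fun _ => ⟨hσi, hg⟩⟩
      · exact ⟨id, fun h => absurd h hi⟩
    choose G hG using hsub
    refine ⟨fun x => Fin.cons (σ (x 0)) (G (x 0) (Fin.tail x)), ?_, ?_⟩
    · rintro x ⟨hx, hxl⟩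
      obtain ⟨hσx, hG⟩ := hG _ hx
      exact ⟨by simpa using hσx, by simpa using hG.1 _ hxl⟩
    · rintro x ⟨hx, hxl⟩ y ⟨hy, hyl⟩
      simp only [prefLen_cons, prefLen_eq_ite x.1 y.1, hσ.eq_iff]
      split_ifs with hxy
      · obtain ⟨_, hG⟩ := hG _ hy
        simp only [hxy] at hxl ⊢
        rw [hG.2 _ hxl _ hyl]
      · rfl

end LabelledTree

namespace TreeModel

variable {V W : Type} {G : SimpleGraph V} {H : SimpleGraph W} {d m : ℕ}

def leafSet (M : TreeModel G d m) : Set ((Fin d → ℕ) × Fin m) :=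
  Set.range fun v => (M.f v, M.col v)

theorem nonempty_embedding_of_isLeafMap (M : TreeModel G d m) (N : TreeModel H d m)
    (hS : ∀ a b, ∀ l ≤ d, M.S a b l ↔ N.S a b l) {g : (Fin d → ℕ) → Fin d → ℕ}
    (hg : LabelledTree.IsLeafMap g M.leafSet N.leafSet) : Nonempty (G ↪g H) := by
  have hlift : ∀ v, ∃ w, N.f w = g (M.f v) ∧ N.col w = M.col v := fun v => by
    obtain ⟨w, hw⟩ := hg.1 _ ⟨v, rfl⟩
    exact ⟨w, Prod.ext_iff.1 hw⟩
  choose e hef hecol using hlift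
  have hpref : ∀ u v, prefLen (N.f (e u)) (N.f (e v)) = prefLen (M.f u) (M.f v) := fun u v => by
    rw [hef, hef]
    exact hg.2 _ ⟨u, rfl⟩ _ ⟨v, rfl⟩
  have he : e.Injective := fun u v huv => M.inj <| eq_of_prefLen_eq <| by
    rw [← hpref, huv, prefLen_self]
  refine ⟨⟨⟨e, he⟩, fun {u v} => ?_⟩⟩
  by_cases huv : u = v
  · subst huv
    simp
  · rw [Function.Embedding.coeFn_mk, N.adj _ _ (he.ne huv), M.adj _ _ huv, hecol, hecol, hpref,
      hS _ _ _ (Nat.sub_le _ _)]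

end TreeModel

theorem InTM.of_embedding {d m : ℕ} {U V : Type} {H : SimpleGraph U} {G : SimpleGraph V}
    (h : InTM d m G) (e : H ↪g G) : InTM d m H :=
  let ⟨M⟩ := h
  ⟨⟨M.f ∘ e, M.inj.comp e.injective, M.col ∘ e, M.S, M.symm, fun u v huv => by
    simpa using M.adj (e u) (e v) (e.injective.ne huv)⟩⟩

theorem InTM.partiallyWellOrderedOn (d m : ℕ) :
    {x : Σ n, SimpleGraph (Fin n) | InTM d m x.2}.PartiallyWellOrderedOn
      fun x y => Nonempty (x.2 ↪g y.2) := by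
  have hcode : (Set.univ : Set ((Fin m → Fin m → Fin (d + 1) → Prop) × LabelledTree m d)
      ).PartiallyWellOrderedOn fun p q => p.1 = q.1 ∧ LabelledTree.Embeds p.2 q.2 := by
    simpa using Set.finite_univ.partiallyWellOrderedOn.prod
      (LabelledTree.partiallyWellOrderedOn_embeds d)
  rw [Set.partiallyWellOrderedOn_iff_exists_lt]
  intro A hA
  have hmodel : ∀ n, ∃ (M : TreeModel (A n).2 d m) (t : LabelledTree m d),
      t.leaves = M.leafSet :=
    fun n => ⟨(hA n).some, LabelledTree.exists_leaves_eq _ (Set.finite_range _)⟩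
  choose M t ht using hmodel
  obtain ⟨i, j, hij, hS, hemb⟩ :=
    hcode.exists_lt (f := fun n => (fun a b (l : Fin (d + 1)) => (M n).S a b l, t n))
      fun _ => Set.mem_univ _
  obtain ⟨g, hg⟩ := LabelledTree.exists_isLeafMap_of_embeds hemb
  refine ⟨i, j, hij,
    (M i).nonempty_embedding_of_isLeafMap (M j) (fun a b l hl => ?_) (ht i ▸ ht j ▸ hg)⟩
  exact iff_of_eq (congrFun (congrFun (congrFun hS a) b) ⟨l, Nat.lt_succ_of_le hl⟩)

theorem InTM.of_isEmpty {V : Type} [IsEmpty V] (G : SimpleGraph V) (d m : ℕ) : InTM d m G :=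
  ⟨⟨isEmptyElim, fun u => isEmptyElim u, isEmptyElim, fun _ _ _ => False, fun _ _ _ => id,
    fun u => isEmptyElim u⟩⟩

theorem InTM.of_fintype_colours {V C : Type} [Fintype C] {G : SimpleGraph V} {d m : ℕ}
    (hC : Fintype.card C ≤ m) (f : V → Fin d → ℕ) (hf : f.Injective) (col : V → C)
    (S : C → C → ℕ → Prop) (hS : ∀ a b l, S a b l → S b a l)
    (hadj : ∀ u v, u ≠ v → (G.Adj u v ↔ S (col u) (col v) (d - prefLen (f u) (f v)))) :
    InTM d m G := by
  let ι : C ↪ Fin m := (Fintype.equivFin C).toEmbedding.trans (Fin.castLEEmb hC)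
  refine ⟨⟨f, hf, ι ∘ col, fun a b l => ∃ a' b', ι a' = a ∧ ι b' = b ∧ S a' b' l, ?_,
    fun u v huv => ?_⟩⟩
  · rintro a b l ⟨a', b', rfl, rfl, h⟩
    exact ⟨b', a', rfl, rfl, hS _ _ _ h⟩
  · simpa [ι.injective.eq_iff] using hadj u v huv

theorem InTM.succ_of_comap_some {V : Type} {d m : ℕ} {G : SimpleGraph (Option V)}
    (h : InTM d m (G.comap some)) : InTM (d + 1) (2 * m + 1) G := by
  classical
  obtain ⟨M⟩ := h
  -- The new vertex gets a root branch of its own, so it meets every old vertex at the top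
  -- level; the colour of an old vertex records whether it is adjacent to the new one.
  let f : Option V → Fin (d + 1) → ℕ
    | none => Fin.cons 1 0
    | some u => Fin.cons 0 (M.f u)
  let col : Option V → Option (Fin m × Bool)
    | none => none
    | some u => some (M.col u, decide (G.Adj none (some u)))
  let S : Option (Fin m × Bool) → Option (Fin m × Bool) → ℕ → Prop
    | some a, some b, l => M.S a.1 b.1 l
    | some a, none, _ | none, some a, _ => a.2
    | none, none, _ => False
  refine InTM.of_fintype_colours (by simp; omega) f ?_ col S ?_ ?_
  · rintro (_ | u) (_ | v) h <;> simp_all [f, Fin.cons_inj, M.inj.eq_iff]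
  · rintro (_ | a) (_ | b) l h <;> simp_all [S, M.symm]
  · rintro (_ | u) (_ | v) huv
    · exact absurd rfl huv
    · simp [f, col, S, prefLen_cons]
    · simp [f, col, S, prefLen_cons, G.adj_comm]
    · simpa [f, col, S, prefLen_cons] using M.adj u v (by simpa using huv)

def InTM.obstructions (d m : ℕ) : Set (Σ n, SimpleGraph (Fin n)) :=
  {x | ¬ InTM d m x.2 ∧
    ∀ y : Σ n, SimpleGraph (Fin n), Nonempty (y.2 ↪g x.2) → ¬ InTM d m y.2 → x.1 ≤ y.1}

theorem InTM.exists_obstruction_embedding {d m n : ℕ} (G : SimpleGraph (Fin n))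
    (hG : ¬ InTM d m G) : ∃ x ∈ InTM.obstructions d m, Nonempty (x.2 ↪g G) := by
  obtain ⟨x, ⟨⟨ex⟩, hx⟩, hmin⟩ := (InvImage.wf (fun x : Σ n, SimpleGraph (Fin n) => x.1)
    wellFounded_lt).has_min {x | Nonempty (x.2 ↪g G) ∧ ¬ InTM d m x.2}
    ⟨⟨n, G⟩, ⟨SimpleGraph.Embedding.refl⟩, hG⟩
  exact ⟨x, ⟨hx, fun y ⟨ey⟩ hy => not_lt.1 (hmin y ⟨⟨ex.comp ey⟩, hy⟩)⟩, ⟨ex⟩⟩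

theorem InTM.obstructions_subset (d m : ℕ) :
    InTM.obstructions d m ⊆ {x | InTM (d + 1) (2 * m + 1) x.2} := by
  rintro ⟨_ | n, G⟩ ⟨hG, hmin⟩
  · exact absurd (InTM.of_isEmpty G d m) hG
  let e := SimpleGraph.Iso.comap finSuccEquivLast.symm G
  have hdel : InTM d m ((G.comap finSuccEquivLast.symm).comap some) := by
    by_contra h
    exact n.not_succ_le_self
      (hmin ⟨n, _⟩ ⟨(SimpleGraph.Embedding.comap .some _).trans e.toEmbedding⟩ h)
  exact (InTM.succ_of_comap_some hdel).of_embedding e.symm.toEmbedding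

/-- For every `d` and `m` there is a finite list of (finite) forbidden induced subgraphs
characterizing `TM(d,m)`: `G ∈ TM(d,m)` iff no member of the list admits an
induced-subgraph embedding into `G`. -/
theorem stmt_17 (d m : ℕ) :
    ∃ (k : ℕ) (sz : Fin k → ℕ) (F : ∀ i : Fin k, SimpleGraph (Fin (sz i))),
      ∀ (V : Type) [Fintype V] (G : SimpleGraph V),
        InTM d m G ↔ ∀ i : Fin k, IsEmpty (F i ↪g G) := by
  obtain ⟨k, F, hF, hbasis⟩ := ((InTM.partiallyWellOrderedOn (d + 1) (2 * m + 1)).mono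
    (InTM.obstructions_subset d m)).exists_fin_basis
  refine ⟨k, fun i => (F i).1, fun i => (F i).2, fun V _ G =>
    ⟨fun hG i => ⟨fun e => (hF i).1 (hG.of_embedding e)⟩, fun h => ?_⟩⟩
  by_contra hG
  let e := SimpleGraph.Iso.comap (Fintype.equivFin V).symm G
  obtain ⟨x, hx, ⟨ex⟩⟩ :=
    InTM.exists_obstruction_embedding _ fun h' => hG (h'.of_embedding e.symm.toEmbedding)
  obtain ⟨i, ⟨ei⟩⟩ := hbasis x hx
  exact (h i).false (e.toEmbedding.comp (ex.comp ei))
end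

section
/- Let T be a coloured rooted tree, X and Y vertex automorphism orbits of T, with x₁,x₂ ∈ X and y₁,y₂ ∈ Y. Let zᵢ be the least common ancestor of xᵢ and yᵢ in T. If dist(x₁,z₁) = dist(x₂,z₂) and dist(y₁,z₁) = dist(y₂,z₂), then there is a colour-preserving automorphism of T mapping (x₁,y₁) to (x₂,y₂). -/
/-- `b` is an ancestor of `a` (possibly `a` itself) in the rooted tree given by `parent`. -/
def Anc {A : Type} (parent : A → A) (b a : A) : Prop := ∃ n : ℕ, parent^[n] a = b

/-- A colour-preserving automorphism of the coloured rooted tree `(parent, root, colour)`. -/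
def IsTreeAut {A : Type} (parent : A → A) (root : A) (colour : A → ℕ) (φ : A ≃ A) : Prop :=
  φ root = root ∧ (∀ a, φ (parent a) = parent (φ a)) ∧ (∀ a, colour (φ a) = colour a)

/-- Distance in the rooted tree from `a` down to its ancestor `b` (number of parent steps). -/
noncomputable def treeDist {A : Type} (parent : A → A) (a b : A) : ℕ :=
  sInf { n : ℕ | parent^[n] a = b }

/-- `z` is the least common ancestor of `x` and `y`. -/
def IsLCA {A : Type} (parent : A → A) (z x y : A) : Prop :=
  Anc parent z x ∧ Anc parent z y ∧
    ∀ w, Anc parent w x → Anc parent w y → Anc parent w z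

/-!
Let `φ` and `ψ` be automorphisms with `φ x₁ = x₂` and `ψ y₁ = y₂`. Both send `z₁` to `z₂`, since
automorphisms commute with `parent` and the distances to `zᵢ` agree. If `x₁ = z₁` or `y₁ = z₁` one
of them already works. Otherwise let `c` be the child of `z₁` above `x₁`. The automorphism
`α = φ ∘ ψ⁻¹` maps the subtree at the child `ψ c` of `z₂` onto the subtree at its sibling `φ c`;
swapping these two sibling subtrees by `α` and `α⁻¹` and fixing everything else is an
automorphism `ρ`, and `ρ ∘ ψ` does the job: it agrees with `φ` on `x₁`, and fixes `y₂` because,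
`zᵢ` being the least common ancestor, neither `ψ c` nor `φ c` lies above `y₂`.
-/

def IsRootedTree {A : Type} (parent : A → A) (root : A) : Prop :=
  parent root = root ∧ ∀ a, ∃ n : ℕ, parent^[n] a = root

open Classical in
noncomputable def subtreeSwap {A : Type} (parent : A → A) (α : A ≃ A) (c a : A) : A :=
  if Anc parent c a then α a else if Anc parent (α c) a then α.symm a else a

section

variable {A : Type} {parent : A → A} {root : A} {colour : A → ℕ}

namespace Anc

theorem of_parent {c a : A} (h : Anc parent c (parent a)) : Anc parent c a := by
  obtain ⟨n, hn⟩ := h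
  exact ⟨n + 1, hn⟩

theorem eq_or_parent {c a : A} (h : Anc parent c a) : a = c ∨ Anc parent c (parent a) := by
  obtain ⟨_ | n, hn⟩ := h
  · exact Or.inl hn
  · exact Or.inr ⟨n, hn⟩

theorem total {b c a : A} (hb : Anc parent b a) (hc : Anc parent c a) :
    Anc parent b c ∨ Anc parent c b := by
  obtain ⟨m, rfl⟩ := hb
  obtain ⟨n, rfl⟩ := hc
  rcases le_total m n with h | h
  · exact Or.inr ⟨n - m, by rw [← Function.iterate_add_apply, Nat.sub_add_cancel h]⟩
  · exact Or.inl ⟨m - n, by rw [← Function.iterate_add_apply, Nat.sub_add_cancel h]⟩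

theorem exists_child {z x : A} (h : Anc parent z x) (hne : x ≠ z) :
    ∃ c, parent c = z ∧ c ≠ z ∧ Anc parent c x := by
  classical
  obtain ⟨k, hk⟩ : ∃ k, Nat.find h = k + 1 :=
    Nat.exists_eq_succ_of_ne_zero fun h0 => hne (by simpa [h0] using Nat.find_spec h)
  refine ⟨parent^[k] x, ?_, Nat.find_min h (by omega), ⟨k, rfl⟩⟩
  rw [← Function.iterate_succ_apply' parent k x, Nat.succ_eq_add_one, ← hk]
  exact Nat.find_spec h

end Anc

theorem iterate_treeDist {a b : A} (h : Anc parent b a) :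
    parent^[treeDist parent a b] a = b :=
  Nat.sInf_mem h

namespace IsTreeAut

variable {φ ψ : A ≃ A}

theorem iterate_apply (hφ : IsTreeAut parent root colour φ) (n : ℕ) (a : A) :
    φ (parent^[n] a) = parent^[n] (φ a) :=
  Function.Semiconj.iterate_right hφ.2.1 n a

theorem anc (hφ : IsTreeAut parent root colour φ) {b a : A} (h : Anc parent b a) :
    Anc parent (φ b) (φ a) := by
  obtain ⟨n, rfl⟩ := h
  exact ⟨n, (hφ.iterate_apply n a).symm⟩

protected theorem symm (hφ : IsTreeAut parent root colour φ) :
    IsTreeAut parent root colour φ.symm :=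
  ⟨φ.symm_apply_eq.2 hφ.1.symm,
    Function.Semiconj.inverse_left hφ.2.1 φ.left_inv φ.right_inv,
    fun a => by rw [← hφ.2.2, φ.apply_symm_apply]⟩

protected theorem trans (hφ : IsTreeAut parent root colour φ)
    (hψ : IsTreeAut parent root colour ψ) : IsTreeAut parent root colour (φ.trans ψ) :=
  ⟨by simp [hφ.1, hψ.1], fun a => by simp [hφ.2.1, hψ.2.1],
    fun a => by simp [hφ.2.2, hψ.2.2]⟩

theorem apply_eq_of_treeDist_eq (hφ : IsTreeAut parent root colour φ) {x₁ x₂ z₁ z₂ : A}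
    (hx : φ x₁ = x₂) (h₁ : Anc parent z₁ x₁) (h₂ : Anc parent z₂ x₂)
    (hd : treeDist parent x₁ z₁ = treeDist parent x₂ z₂) : φ z₁ = z₂ := by
  rw [← iterate_treeDist h₁, hφ.iterate_apply, hx, hd, iterate_treeDist h₂]

theorem parent_ne (hφ : IsTreeAut parent root colour φ) {c : A} (hc : parent c ≠ c) :
    parent (φ c) ≠ φ c := by
  rw [← hφ.2.1]
  exact φ.injective.ne hc

end IsTreeAut

theorem not_anc_root (hroot : parent root = root) {c : A} (hc : parent c ≠ c) :
    ¬ Anc parent c root := by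
  rintro ⟨n, hn⟩
  rw [Function.iterate_fixed hroot] at hn
  exact hc (hn ▸ hroot)

namespace IsRootedTree

theorem not_anc_parent (hT : IsRootedTree parent root) {c : A} (hc : parent c ≠ c) :
    ¬ Anc parent c (parent c) := by
  rintro ⟨n, hn⟩
  obtain ⟨N, hN⟩ := hT.2 c
  have hper : Function.IsPeriodicPt parent (n + 1) c := hn
  have hroot : c = root :=
    calc c = parent^[(n + 1) * N] c := (hper.mul_const N).eq.symm
      _ = root := by
        rw [Nat.succ_mul, Function.iterate_add_apply, hN, Function.iterate_fixed hT.1]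
  exact hc (hroot ▸ hT.1)

theorem not_anc_of_parent_eq (hT : IsRootedTree parent root) {c e : A}
    (hsib : parent c = parent e) (hc : parent c ≠ c) (hce : c ≠ e) : ¬ Anc parent c e := by
  intro h
  rcases h.eq_or_parent with rfl | h
  · exact hce rfl
  · exact hT.not_anc_parent hc (hsib ▸ h)

theorem disjoint_of_parent_eq (hT : IsRootedTree parent root) {c e a : A}
    (hsib : parent c = parent e) (hc : parent c ≠ c) (he : parent e ≠ e) (hce : c ≠ e)
    (hca : Anc parent c a) (hea : Anc parent e a) : False :=
  (hca.total hea).elim (hT.not_anc_of_parent_eq hsib hc hce)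
    (hT.not_anc_of_parent_eq hsib.symm he hce.symm)

end IsRootedTree

theorem IsLCA.not_anc_child (hT : IsRootedTree parent root) {z x y c : A}
    (h : IsLCA parent z x y) (hc : parent c ≠ c) (hcz : parent c = z)
    (hx : Anc parent c x) (hy : Anc parent c y) : False :=
  hT.not_anc_parent hc (hcz ▸ h.2.2 c hx hy)

section SubtreeSwap

variable {α : A ≃ A} {c a : A}

theorem subtreeSwap_of_anc (h : Anc parent c a) : subtreeSwap parent α c a = α a :=
  if_pos h

theorem subtreeSwap_of_not_anc_of_anc (h₁ : ¬ Anc parent c a) (h₂ : Anc parent (α c) a) :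
    subtreeSwap parent α c a = α.symm a := by
  rw [subtreeSwap, if_neg h₁, if_pos h₂]

theorem subtreeSwap_of_not_anc (h₁ : ¬ Anc parent c a) (h₂ : ¬ Anc parent (α c) a) :
    subtreeSwap parent α c a = a := by
  rw [subtreeSwap, if_neg h₁, if_neg h₂]

theorem subtreeSwap_symm_subtreeSwap (hT : IsRootedTree parent root)
    (hα : IsTreeAut parent root colour α) (hc : parent c ≠ c) (hsib : parent (α c) = parent c)
    (a : A) : subtreeSwap parent α.symm (α c) (subtreeSwap parent α c a) = a := by
  by_cases h₁ : Anc parent c a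
  · rw [subtreeSwap_of_anc h₁, subtreeSwap_of_anc (hα.anc h₁), Equiv.symm_apply_apply]
  by_cases h₂ : Anc parent (α c) a
  · have h₃ : Anc parent c (α.symm a) := by simpa using hα.symm.anc h₂
    have h₄ : ¬ Anc parent (α c) (α.symm a) := fun h₄ =>
      hT.disjoint_of_parent_eq hsib (hα.parent_ne hc) hc (fun h => h₁ (h ▸ h₂)) h₄ h₃
    rw [subtreeSwap_of_not_anc_of_anc h₁ h₂,
      subtreeSwap_of_not_anc_of_anc h₄ (by simpa using h₃), Equiv.symm_symm,
      Equiv.apply_symm_apply]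
  · rw [subtreeSwap_of_not_anc h₁ h₂, subtreeSwap_of_not_anc h₂ (by simpa using h₁)]

theorem subtreeSwap_parent (hT : IsRootedTree parent root)
    (hα : IsTreeAut parent root colour α) (hc : parent c ≠ c) (hsib : parent (α c) = parent c)
    (a : A) : subtreeSwap parent α c (parent a) = parent (subtreeSwap parent α c a) := by
  have hfix : subtreeSwap parent α c (parent c) = parent c :=
    subtreeSwap_of_not_anc (hT.not_anc_parent hc) (hsib ▸ hT.not_anc_parent (hα.parent_ne hc))
  by_cases h₁ : Anc parent c a
  · rw [subtreeSwap_of_anc h₁]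
    rcases h₁.eq_or_parent with rfl | h
    · rw [hfix, hsib]
    · rw [subtreeSwap_of_anc h, hα.2.1]
  have hp₁ : ¬ Anc parent c (parent a) := fun h => h₁ h.of_parent
  by_cases h₂ : Anc parent (α c) a
  · rw [subtreeSwap_of_not_anc_of_anc h₁ h₂]
    rcases h₂.eq_or_parent with rfl | h
    · rw [hsib, hfix, Equiv.symm_apply_apply]
    · rw [subtreeSwap_of_not_anc_of_anc hp₁ h, hα.symm.2.1]
  · rw [subtreeSwap_of_not_anc h₁ h₂, subtreeSwap_of_not_anc hp₁ fun h => h₂ h.of_parent]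

theorem IsRootedTree.exists_isTreeAut_eqOn_subtree (hT : IsRootedTree parent root)
    (hα : IsTreeAut parent root colour α) (hc : parent c ≠ c) (hsib : parent (α c) = parent c) :
    ∃ ρ : A ≃ A, IsTreeAut parent root colour ρ ∧ (∀ a, Anc parent c a → ρ a = α a) ∧
      ∀ a, ¬ Anc parent c a → ¬ Anc parent (α c) a → ρ a = a := by
  have hsib' : parent (α.symm (α c)) = parent (α c) := by rw [α.symm_apply_apply, hsib]
  refine ⟨⟨subtreeSwap parent α c, subtreeSwap parent α.symm (α c),
      subtreeSwap_symm_subtreeSwap hT hα hc hsib, fun a => ?_⟩,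
    ⟨?_, subtreeSwap_parent hT hα hc hsib, fun a => ?_⟩,
    fun _ => subtreeSwap_of_anc, fun _ => subtreeSwap_of_not_anc⟩
  · simpa using subtreeSwap_symm_subtreeSwap hT hα.symm (hα.parent_ne hc) hsib' a
  · exact subtreeSwap_of_not_anc (not_anc_root hT.1 hc) (not_anc_root hT.1 (hα.parent_ne hc))
  · show colour (subtreeSwap parent α c a) = colour a
    unfold subtreeSwap
    split_ifs <;> simp [hα.2.2, hα.symm.2.2]

end SubtreeSwap

end

theorem stmt_18_general {A : Type} (parent : A → A) (root : A) (colour : A → ℕ)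
    (hroot : parent root = root) (hwf : ∀ a, ∃ n : ℕ, parent^[n] a = root)
    (x₁ x₂ y₁ y₂ z₁ z₂ : A)
    (hx : ∃ φ : A ≃ A, IsTreeAut parent root colour φ ∧ φ x₁ = x₂)
    (hy : ∃ φ : A ≃ A, IsTreeAut parent root colour φ ∧ φ y₁ = y₂)
    (hz₁ : IsLCA parent z₁ x₁ y₁) (hz₂ : IsLCA parent z₂ x₂ y₂)
    (hdx : treeDist parent x₁ z₁ = treeDist parent x₂ z₂)
    (hdy : treeDist parent y₁ z₁ = treeDist parent y₂ z₂) :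
    ∃ φ : A ≃ A, IsTreeAut parent root colour φ ∧ φ x₁ = x₂ ∧ φ y₁ = y₂ := by
  have hT : IsRootedTree parent root := ⟨hroot, hwf⟩
  obtain ⟨φ, hφ, hφx⟩ := hx
  obtain ⟨ψ, hψ, hψy⟩ := hy
  have hφz : φ z₁ = z₂ := hφ.apply_eq_of_treeDist_eq hφx hz₁.1 hz₂.1 hdx
  have hψz : ψ z₁ = z₂ := hψ.apply_eq_of_treeDist_eq hψy hz₁.2.1 hz₂.2.1 hdy
  by_cases hxz : x₁ = z₁
  · exact ⟨ψ, hψ, by rw [hxz, hψz, ← hφz, ← hxz, hφx], hψy⟩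
  by_cases hyz : y₁ = z₁
  · exact ⟨φ, hφ, hφx, by rw [hyz, hφz, ← hψz, ← hyz, hψy]⟩
  obtain ⟨c, hcz, hcne, hcx⟩ := hz₁.1.exists_child hxz
  have hc : parent c ≠ c := hcz ▸ hcne.symm
  have hαc : (ψ.symm.trans φ) (ψ c) = φ c := by simp
  have hψc : parent (ψ c) = z₂ := by rw [← hψ.2.1, hcz, hψz]
  have hφc : parent (φ c) = z₂ := by rw [← hφ.2.1, hcz, hφz]
  obtain ⟨ρ, hρ, hρα, hρid⟩ := hT.exists_isTreeAut_eqOn_subtree (hψ.symm.trans hφ)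
    (hψ.parent_ne hc) (by rw [hαc, hψc, hφc])
  refine ⟨ψ.trans ρ, hψ.trans hρ, by simp [hρα _ (hψ.anc hcx), hφx], ?_⟩
  rw [Equiv.trans_apply, hψy]
  refine hρid _ (fun h => ?_) (fun h => ?_)
  · exact hz₁.not_anc_child hT hc hcz hcx (by simpa [← hψy] using hψ.symm.anc h)
  · rw [hαc] at h
    exact hz₂.not_anc_child hT (hφ.parent_ne hc) hφc (hφx ▸ hφ.anc hcx) h

/-- Let `T` be a finite coloured rooted tree, let `x₁, x₂` lie in a common vertex
automorphism orbit and likewise `y₁, y₂`, and let `zᵢ` be the least common ancestor of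
`xᵢ` and `yᵢ`. If `dist(x₁,z₁) = dist(x₂,z₂)` and `dist(y₁,z₁) = dist(y₂,z₂)`, then some
colour-preserving automorphism of `T` maps the pair `(x₁,y₁)` onto `(x₂,y₂)`. -/
theorem stmt_18 {A : Type} [Fintype A] (parent : A → A) (root : A) (colour : A → ℕ)
    (hroot : parent root = root) (hwf : ∀ a, ∃ n : ℕ, parent^[n] a = root)
    (x₁ x₂ y₁ y₂ z₁ z₂ : A)
    (hx : ∃ φ : A ≃ A, IsTreeAut parent root colour φ ∧ φ x₁ = x₂)
    (hy : ∃ φ : A ≃ A, IsTreeAut parent root colour φ ∧ φ y₁ = y₂)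
    (hz₁ : IsLCA parent z₁ x₁ y₁) (hz₂ : IsLCA parent z₂ x₂ y₂)
    (hdx : treeDist parent x₁ z₁ = treeDist parent x₂ z₂)
    (hdy : treeDist parent y₁ z₁ = treeDist parent y₂ z₂) :
    ∃ φ : A ≃ A, IsTreeAut parent root colour φ ∧ φ x₁ = x₂ ∧ φ y₁ = y₂ :=
  stmt_18_general parent root colour hroot hwf x₁ x₂ y₁ y₂ z₁ z₂ hx hy hz₁ hz₂ hdx hdy
end
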